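/- (Quadratic growth from the coercivity-type Assumption 4.) Let $\bar u\in U_{ad}$ satisfy the first-order optimality conditions ($J'(\bar u)(u-\bar u)\ge0$ for all $u\in U_{ad}$) and suppose there exist $\alpha,\gamma>0$ with $J'(\bar u)(u-\bar u)+J''(\bar u)(u-\bar u)^2\ge\gamma\|z_{\bar u,u-\bar u}\|^2_{L^2(\Omega)}$ for all $u\in U_{ad}$ with $\|y_u-\bar y\|_{C(\bar\Omega)}<\alpha$. Then there exist $\varepsilon>0$ and $\kappa>0$ such that $J(\bar u)+\frac{\kappa}{2}\|y_u-\bar y\|^2_{L^2(\Omega)}\le J(u)$ for all $u\in U_{ad}$ with $\|y_u-\bar y\|_{C(\bar\Omega)}<\varepsilon$; in particular $\bar u$ is a strict strong local minimizer. -/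

import Mathlib

open MeasureTheory ENNReal Filter

/-!
Expand `J` to second order around `ū` with an intermediate point `u_θ`. Choosing the
neighbourhood so that `J''(u_θ)` and `J''(ū)` differ by at most `(γ/2)‖z‖²` on `u - ū`,
Assumption 4 and the first-order condition `J'(ū)(u - ū) ≥ 0` give
`J(u) ≥ J(ū) + (γ/4)‖z_{ū,u-ū}‖²`. The norm equivalence `‖y_u - ȳ‖ ≤ 2‖z_{ū,u-ū}‖` turns
this into quadratic growth in the state with `κ = γ/8`.
-/

/-- `L^p`-type norm (`p = ∞` gives the `C(Ω̄)` sup-norm). -/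
noncomputable def nrm {Ω : Type*} [MeasurableSpace Ω] (μ : Measure Ω) (p : ℝ≥0∞)
    (f : Ω → ℝ) : ℝ := (eLpNorm f p μ).toReal

/-- The admissible set `U_{ad} = {u ∈ L²(Ω) : u_a ≤ u(x) ≤ u_b a.e.}`. -/
def Uad {Ω : Type*} [MeasurableSpace Ω] (μ : Measure Ω) (ua ub : ℝ) : Set (Ω → ℝ) :=
  {u | MemLp u 2 μ ∧ ∀ᵐ x ∂μ, ua ≤ u x ∧ u x ≤ ub}

theorem add_quarter_mul_sq_le_of_taylor {j j' d₁ d₂ d₂θ γ z : ℝ} (hd₁ : 0 ≤ d₁)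
    (hcoercive : γ * z ^ 2 ≤ d₁ + d₂) (hclose : |d₂θ - d₂| ≤ γ / 2 * z ^ 2)
    (htaylor : j' = j + d₁ + 1 / 2 * d₂θ) :
    j + γ / 4 * z ^ 2 ≤ j' := by
  have hd₂θ : d₂ - γ / 2 * z ^ 2 ≤ d₂θ := by linarith [(abs_le.mp hclose).1]
  linarith

theorem sq_le_four_mul_sq_of_half_le {y z : ℝ} (hy : 0 ≤ y) (h : 1 / 2 * y ≤ z) :
    y ^ 2 ≤ 4 * z ^ 2 := by
  nlinarith

theorem quadratic_growth_general
    {Ω : Type*} [MeasurableSpace Ω] (μ : Measure Ω)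
    (ua ub : ℝ)
    (J : (Ω → ℝ) → ℝ)
    (J1 J2 : (Ω → ℝ) → (Ω → ℝ) → ℝ)  -- J' and the quadratic form v ↦ J''(u)v²
    (Y : (Ω → ℝ) → (Ω → ℝ)) (Z : (Ω → ℝ) → (Ω → ℝ) → (Ω → ℝ))
    (ubar : Ω → ℝ)
    -- first-order optimality condition
    (hfoc : ∀ u ∈ Uad μ ua ub, 0 ≤ J1 ubar (u - ubar))
    -- Assumption 4
    (α γ : ℝ) (hα : 0 < α) (hγ : 0 < γ)
    (hA4 : ∀ u ∈ Uad μ ua ub, nrm μ ⊤ (Y u - Y ubar) < α →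
      γ * (nrm μ 2 (Z ubar (u - ubar))) ^ 2 ≤
        J1 ubar (u - ubar) + J2 ubar (u - ubar))
    -- Taylor expansion of J with intermediate point
    (htaylor : ∀ u ∈ Uad μ ua ub, ∃ θ ∈ Set.Icc (0:ℝ) 1,
      J u = J ubar + J1 ubar (u - ubar) +
        1/2 * J2 (ubar + θ • (u - ubar)) (u - ubar))
    -- key technical input (Lemma 3.3): uniform continuity of J'' near ū
    (hJ2cont : ∀ ρ > (0:ℝ), ∃ ε > (0:ℝ), ∀ u ∈ Uad μ ua ub,
      nrm μ ⊤ (Y u - Y ubar) < ε → ∀ v : Ω → ℝ, ∀ θ ∈ Set.Icc (0:ℝ) 1,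
        |J2 (ubar + θ • (u - ubar)) v - J2 ubar v| ≤ ρ * (nrm μ 2 (Z ubar v)) ^ 2)
    -- norm equivalence near ū
    (hequiv : ∃ ε > (0:ℝ), ∀ u ∈ Uad μ ua ub, nrm μ ⊤ (Y u - Y ubar) < ε →
      1/2 * nrm μ 2 (Y u - Y ubar) ≤ nrm μ 2 (Z ubar (u - ubar))) :
    ∃ ε > (0:ℝ), ∃ κ > (0:ℝ), ∀ u ∈ Uad μ ua ub,
      nrm μ ⊤ (Y u - Y ubar) < ε →
      J ubar + κ/2 * (nrm μ 2 (Y u - Y ubar)) ^ 2 ≤ J u := by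
  obtain ⟨εJ2, hεJ2, hJ2close⟩ := hJ2cont (γ / 2) (by positivity)
  obtain ⟨εeq, hεeq, hYZ⟩ := hequiv
  refine ⟨min α (min εJ2 εeq), by positivity, γ / 8, by positivity, fun u hu hsmall => ?_⟩
  simp only [lt_min_iff] at hsmall
  obtain ⟨hα', hεJ2', hεeq'⟩ := hsmall
  obtain ⟨θ, hθ, hJu⟩ := htaylor u hu
  have hgrowth : J ubar + γ / 4 * nrm μ 2 (Z ubar (u - ubar)) ^ 2 ≤ J u :=
    add_quarter_mul_sq_le_of_taylor (hfoc u hu) (hA4 u hu hα')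
      (hJ2close u hu hεJ2' (u - ubar) θ hθ) hJu
  have hstate : nrm μ 2 (Y u - Y ubar) ^ 2 ≤ 4 * nrm μ 2 (Z ubar (u - ubar)) ^ 2 :=
    sq_le_four_mul_sq_of_half_le ENNReal.toReal_nonneg (hYZ u hu hεeq')
  linarith [mul_le_mul_of_nonneg_left hstate hγ.le]

/-- **Quadratic growth (Theorem 3.3).** If `ū ∈ U_{ad}` satisfies the first-order
optimality condition and Assumption 4
(`J'(ū)(u-ū) + J''(ū)(u-ū)² ≥ γ‖z_{ū,u-ū}‖²_{L²}` for admissible `u` with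
`‖y_u - ȳ‖_{C(Ω̄)} < α`), then there are `ε, κ > 0` with
`J(ū) + (κ/2)‖y_u - ȳ‖²_{L²} ≤ J(u)` for all `u ∈ U_{ad}` with
`‖y_u - ȳ‖_{C(Ω̄)} < ε`. -/
theorem quadratic_growth
    {Ω : Type*} [MeasurableSpace Ω] (μ : Measure Ω) [IsFiniteMeasure μ]
    (ua ub : ℝ) (hab : ua < ub)
    (J : (Ω → ℝ) → ℝ)
    (J1 J2 : (Ω → ℝ) → (Ω → ℝ) → ℝ)  -- J' and the quadratic form v ↦ J''(u)v²
    (Y : (Ω → ℝ) → (Ω → ℝ)) (Z : (Ω → ℝ) → (Ω → ℝ) → (Ω → ℝ))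
    (ubar : Ω → ℝ) (hubar : ubar ∈ Uad μ ua ub)
    -- first-order optimality condition
    (hfoc : ∀ u ∈ Uad μ ua ub, 0 ≤ J1 ubar (u - ubar))
    -- Assumption 4
    (α γ : ℝ) (hα : 0 < α) (hγ : 0 < γ)
    (hA4 : ∀ u ∈ Uad μ ua ub, nrm μ ⊤ (Y u - Y ubar) < α →
      γ * (nrm μ 2 (Z ubar (u - ubar))) ^ 2 ≤
        J1 ubar (u - ubar) + J2 ubar (u - ubar))
    -- Taylor expansion of J with intermediate point
    (htaylor : ∀ u ∈ Uad μ ua ub, ∃ θ ∈ Set.Icc (0:ℝ) 1,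
      J u = J ubar + J1 ubar (u - ubar) +
        1/2 * J2 (ubar + θ • (u - ubar)) (u - ubar))
    -- key technical input (Lemma 3.3): uniform continuity of J'' near ū
    (hJ2cont : ∀ ρ > (0:ℝ), ∃ ε > (0:ℝ), ∀ u ∈ Uad μ ua ub,
      nrm μ ⊤ (Y u - Y ubar) < ε → ∀ v : Ω → ℝ, ∀ θ ∈ Set.Icc (0:ℝ) 1,
        |J2 (ubar + θ • (u - ubar)) v - J2 ubar v| ≤ ρ * (nrm μ 2 (Z ubar v)) ^ 2)
    -- norm equivalence near ū
    (hequiv : ∃ ε > (0:ℝ), ∀ u ∈ Uad μ ua ub, nrm μ ⊤ (Y u - Y ubar) < ε →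
      1/2 * nrm μ 2 (Y u - Y ubar) ≤ nrm μ 2 (Z ubar (u - ubar))) :
    ∃ ε > (0:ℝ), ∃ κ > (0:ℝ), ∀ u ∈ Uad μ ua ub,
      nrm μ ⊤ (Y u - Y ubar) < ε →
      J ubar + κ/2 * (nrm μ 2 (Y u - Y ubar)) ^ 2 ≤ J u :=
  quadratic_growth_general μ ua ub J J1 J2 Y Z ubar hfoc α γ hα hγ hA4 htaylor hJ2cont hequiv
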